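/- Let a > 0 and n = 1, and let W̃ be an N×N matrix with nonnegative entries and positive diagonal entries. Then at every point v ∈ (0,1)^N whose entries are pairwise distinct, the Hessian matrix of the energy E(·,W̃) is positive definite. -/

import Mathlib

/-!
Since `(|s| - 1)² - 1 = s² - 2|s|`, the energy equals
`Σ_{p,q} a w̃_{pq} (v_p² + v_q²) - a Σ_{p,q} w̃_{pq} (|v_q - v_p| + |v_q + v_p|)`.
At a point with positive, pairwise distinct entries, none of the nonzero linear forms
`v_q - v_p`, `v_q + v_p` vanishes, so near it the absolute values are linear and the Hessian is
that of the quadratic part alone, which is positive definite because `w̃_{pp} > 0`.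
-/

open Filter Topology

/-- Penaliser `Ψ̃_{a,n}(s) = a·((|s|−1)^(2n) − 1)`; here `n = 1`. -/
noncomputable def psi (a : ℝ) (n : ℕ) (s : ℝ) : ℝ := a * ((|s| - 1) ^ (2 * n) - 1)

/-- Energy `E(v,W̃) = (1/2)·Σᵢ Σⱼ w̃ᵢⱼ·(Ψ̃(vⱼ−vᵢ) + Ψ̃(vⱼ+vᵢ))`. -/
noncomputable def energy {N : ℕ} (a : ℝ) (n : ℕ) (W : Matrix (Fin N) (Fin N) ℝ)
    (v : Fin N → ℝ) : ℝ :=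
  (1 / 2) * ∑ i, ∑ j, W i j * (psi a n (v j - v i) + psi a n (v j + v i))

/-- Hessian matrix of the energy at `v`. -/
noncomputable def hessianE {N : ℕ} (a : ℝ) (n : ℕ) (W : Matrix (Fin N) (Fin N) ℝ)
    (v : Fin N → ℝ) : Matrix (Fin N) (Fin N) ℝ :=
  fun i j => iteratedFDeriv ℝ 2 (energy a n W) v ![Pi.single i 1, Pi.single j 1]

theorem iteratedFDeriv_two_bilinear_add_linear {𝕜 E F : Type*} [NontriviallyNormedField 𝕜]
    [NormedAddCommGroup E] [NormedSpace 𝕜 E] [NormedAddCommGroup F] [NormedSpace 𝕜 F]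
    (B : E →L[𝕜] E →L[𝕜] F) (ℓ : E →L[𝕜] F) (v u w : E) :
    iteratedFDeriv 𝕜 2 (fun x => B x x + ℓ x) v ![u, w] = B u w + B w u := by
  have hfderiv : fderiv 𝕜 (fun x => B x x + ℓ x) = fun x => (B + B.flip) x + ℓ := by
    ext x : 1
    refine (((B.hasFDerivAt_of_bilinear (hasFDerivAt_id x) (hasFDerivAt_id x)).add
      ℓ.hasFDerivAt).congr_fderiv ?_).fderiv
    ext y
    simp [add_comm]
  rw [iteratedFDeriv_two_apply, hfderiv, ((B + B.flip).hasFDerivAt.add_const ℓ).fderiv]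
  simp

theorem Matrix.posDef_toMatrix₂' {R n : Type*} [CommRing R] [PartialOrder R] [StarRing R]
    [TrivialStar R] [Fintype n] [DecidableEq n] {B : (n → R) →ₗ[R] (n → R) →ₗ[R] R}
    (hB : ∀ x y, B x y = B y x) (hpos : ∀ x, x ≠ 0 → 0 < B x x) :
    (LinearMap.toMatrix₂' R B).PosDef := by
  refine Matrix.posDef_iff_dotProduct_mulVec.2 ⟨?_, fun x hx => ?_⟩
  · ext i j
    simp [hB]
  · rw [star_trivial, ← Matrix.toLinearMap₂'_apply', Matrix.toLinearMap₂'_toMatrix']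
    exact hpos x hx

theorem ContinuousAt.eventually_abs_eq_sign_mul {X : Type*} [TopologicalSpace X] {f : X → ℝ}
    {x₀ : X} (hf : ContinuousAt f x₀) (h₀ : f x₀ ≠ 0) :
    ∀ᶠ x in 𝓝 x₀, |f x| = Real.sign (f x₀) * f x := by
  rcases h₀.lt_or_gt with hneg | hpos
  · filter_upwards [hf.eventually_lt continuousAt_const hneg] with x hx
    rw [abs_of_neg hx, Real.sign_of_neg hneg, neg_one_mul]
  · filter_upwards [continuousAt_const.eventually_lt hf hpos] with x hx
    rw [abs_of_pos hx, Real.sign_of_pos hpos, one_mul]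

theorem psi_one (a s : ℝ) : psi a 1 s = a * (s ^ 2 - 2 * |s|) := by
  rw [psi, mul_one, sub_sq, sq_abs]
  ring

section Energy

variable {N : ℕ} (a : ℝ) (W : Matrix (Fin N) (Fin N) ℝ)

noncomputable def energyBilin : (Fin N → ℝ) →L[ℝ] (Fin N → ℝ) →L[ℝ] ℝ :=
  ∑ p, ∑ q, (a * W p q) •
    ((ContinuousLinearMap.mul ℝ ℝ).bilinearComp (.proj p) (.proj p) +
      (ContinuousLinearMap.mul ℝ ℝ).bilinearComp (.proj q) (.proj q))

@[simp]
theorem energyBilin_apply (x y : Fin N → ℝ) :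
    energyBilin a W x y = ∑ p, ∑ q, a * W p q * (x p * y p + x q * y q) := by
  simp [energyBilin, mul_add]

theorem energy_one_eq (x : Fin N → ℝ) :
    energy a 1 W x =
      energyBilin a W x x - a * ∑ p, ∑ q, W p q * (|x q - x p| + |x q + x p|) := by
  simp only [energy, energyBilin_apply, psi_one, Finset.mul_sum, ← Finset.sum_sub_distrib]
  refine Finset.sum_congr rfl fun p _ => Finset.sum_congr rfl fun q _ => ?_
  ring

variable {a W}

theorem energyBilin_self_pos (ha : 0 < a) (hW : ∀ i j, 0 ≤ W i j) (hdiag : ∀ i, 0 < W i i)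
    {x : Fin N → ℝ} (hx : x ≠ 0) : 0 < energyBilin a W x x := by
  obtain ⟨i, hi⟩ := Function.ne_iff.1 hx
  have hterm : ∀ p q, 0 ≤ a * W p q * (x p * x p + x q * x q) := fun p q =>
    mul_nonneg (mul_nonneg ha.le (hW p q)) (add_nonneg (mul_self_nonneg _) (mul_self_nonneg _))
  rw [energyBilin_apply]
  calc 0 < a * W i i * (x i * x i + x i * x i) := by
        have := mul_self_pos.2 hi
        have := hdiag i
        positivity
    _ ≤ ∑ q, a * W i q * (x i * x i + x q * x q) :=
        Finset.single_le_sum (fun q _ => hterm i q) (Finset.mem_univ i)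
    _ ≤ ∑ p, ∑ q, a * W p q * (x p * x p + x q * x q) :=
        Finset.single_le_sum (f := fun p => ∑ q, a * W p q * (x p * x p + x q * x q))
          (fun p _ => Finset.sum_nonneg fun q _ => hterm p q) (Finset.mem_univ i)

theorem energy_eventuallyEq_bilin_add_linear {v : Fin N → ℝ} (hv : ∀ i, 0 < v i)
    (hdist : ∀ i j, i ≠ j → v i ≠ v j) :
    ∃ ℓ : (Fin N → ℝ) →L[ℝ] ℝ, energy a 1 W =ᶠ[𝓝 v] fun x => energyBilin a W x x + ℓ x := by
  refine ⟨-a • ∑ p, ∑ q, W p q • (Real.sign (v q - v p) • (.proj q - .proj p) +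
    (.proj q + .proj p)), ?_⟩
  have hsub : ∀ p q, ∀ᶠ x in 𝓝 v, |x q - x p| = Real.sign (v q - v p) * (x q - x p) := by
    intro p q
    rcases eq_or_ne p q with rfl | hpq
    · simp
    · exact ((continuous_apply q).sub (continuous_apply p)).continuousAt
        |>.eventually_abs_eq_sign_mul (sub_ne_zero.2 (hdist q p hpq.symm))
  have hadd : ∀ p q, ∀ᶠ x in 𝓝 v, |x q + x p| = x q + x p := fun p q =>
    (continuousAt_const.eventually_lt ((continuous_apply q).add (continuous_apply p)).continuousAt
      (add_pos (hv q) (hv p))).mono fun x hx => abs_of_pos hx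
  filter_upwards [eventually_all.2 fun p => eventually_all.2 (hsub p),
    eventually_all.2 fun p => eventually_all.2 (hadd p)] with x hsubx haddx
  rw [energy_one_eq]
  simp only [hsubx, haddx]
  simp [mul_add, sub_eq_add_neg]

end Energy

theorem stmt5 (a : ℝ) (ha : 0 < a) (N : ℕ)
    (W : Matrix (Fin N) (Fin N) ℝ) (hW : ∀ i j, 0 ≤ W i j) (hdiag : ∀ i, 0 < W i i)
    (v : Fin N → ℝ) (hv : ∀ i, v i ∈ Set.Ioo (0 : ℝ) 1)
    (hdist : ∀ i j, i ≠ j → v i ≠ v j) :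
    (hessianE a 1 W v).PosDef := by
  obtain ⟨ℓ, hℓ⟩ := energy_eventuallyEq_bilin_add_linear (fun i => (hv i).1) hdist
  set C := energyBilin a W + (energyBilin a W).flip
  have hH : hessianE a 1 W v =
      LinearMap.toMatrix₂' ℝ ((ContinuousLinearMap.coeLM ℝ).comp C.toLinearMap) := by
    ext i j
    rw [LinearMap.toMatrix₂'_apply, hessianE, (hℓ.iteratedFDeriv ℝ 2).eq_of_nhds,
      iteratedFDeriv_two_bilinear_add_linear]
    simp [C]
  rw [hH]
  refine Matrix.posDef_toMatrix₂' (fun x y => ?_) (fun x hx => ?_)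
  · simp [C, add_comm]
  · have := energyBilin_self_pos ha hW hdiag hx
    simpa [C] using add_pos this this
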